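/- Let M be a divergent skip free martingale, i.e. a skip free process that is a martingale with respect to some filtration F = (F_n)_{n≥0} to which its quadratic variation is adapted, and which satisfies lim_{n→∞} [M]_n = +∞ almost surely. Define τ_0 = 0 and τ_n = inf{k > τ_{n−1} : [M]_k = n}. Then the time-changed process S^M = (M_{τ_n})_{n≥0} is a symmetric Bernoulli random walk (it is an (F_{τ_n})-martingale with increments of absolute value 1, hence has i.i.d. increments uniform on {−1,+1}). -/

import Mathlib

/-!
On a skip free path the quadratic variation counts the nonzero moves, so `τ_n` is the time of
the `n`-th move and `S_{n+1} - S_n = ±1` is the `(n+1)`-st move. Let `A` be an event fixed by the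
first `n` moves. Keeping the increment `M_{k+1} - M_k` only when `[M]_k = n` and the moves made
by time `k` are compatible with `A` (an `F_k`-event) gives a martingale transform, with mean zero
and absolute value at most `1`, that converges to `1_A (S_{n+1} - S_n)`; by dominated convergence
`E[1_A (S_{n+1} - S_n)] = 0`. For a `±1`-valued variable `X` with mean zero on `A`,
`P(A ∩ {X ∈ B}) = P(A) · bern(B)`, and induction on the last index yields independence.
-/

open MeasureTheory ProbabilityTheory Filter Finset
open scoped ENNReal NNReal

noncomputable section

/-- The quadratic variation `[s]_n` of a discrete real-valued path `s`. -/
def qvR (s : ℕ → ℝ) (n : ℕ) : ℝ :=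
  ∑ k ∈ Finset.range n, (s (k + 1) - s k) ^ 2

/-- The successive times at which the quadratic variation of `s` increases:
`τ_0 = 0` and `τ_{n+1} = inf {k > τ_n : [s]_k = n + 1}`, with `inf ∅ = τ_n`. -/
def tauR (s : ℕ → ℝ) : ℕ → ℕ
  | 0 => 0
  | n + 1 => max (tauR s n) (sInf {k | tauR s n < k ∧ qvR s k = (n + 1 : ℝ)})

/-- The time-changed path `S^s = (s_{τ_n})_n`. -/
def SMR (s : ℕ → ℝ) : ℕ → ℝ := fun n => s (tauR s n)

/-- A skip free path: starts at `0` and has increments in `{-1, 0, 1}`. -/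
def SkipFreePathR (s : ℕ → ℝ) : Prop :=
  s 0 = 0 ∧ ∀ n, s (n + 1) - s n = 1 ∨ s (n + 1) - s n = 0 ∨ s (n + 1) - s n = -1

/-- The uniform law on `{-1, +1} ⊆ ℝ`. -/
def bernR : Measure ℝ :=
  (2 : ℝ≥0∞)⁻¹ • Measure.dirac (1 : ℝ) + (2 : ℝ≥0∞)⁻¹ • Measure.dirac (-1 : ℝ)

open scoped Topology

def jumpCount (s : ℕ → ℝ) (k : ℕ) : ℕ :=
  ∑ j ∈ range k, if s (j + 1) = s j then 0 else 1

def passageTime (s : ℕ → ℝ) (n : ℕ) : ℕ := sInf {k | n ≤ jumpCount s k}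

def passageIncrement (s : ℕ → ℝ) (n : ℕ) : ℝ :=
  s (passageTime s (n + 1)) - s (passageTime s n)

def levelSum (s : ℕ → ℝ) (n K : ℕ) : ℝ :=
  ∑ k ∈ range K, if jumpCount s k = n then s (k + 1) - s k else 0

section Path

variable {s : ℕ → ℝ}

@[simp]
lemma jumpCount_zero : jumpCount s 0 = 0 := rfl

lemma jumpCount_succ (k : ℕ) :
    jumpCount s (k + 1) = jumpCount s k + if s (k + 1) = s k then 0 else 1 :=
  sum_range_succ _ k

lemma jumpCount_mono : Monotone (jumpCount s) :=
  monotone_nat_of_le_succ fun k => by rw [jumpCount_succ]; exact Nat.le_add_right _ _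

lemma eq_of_jumpCount_eq {a b : ℕ} (hab : a ≤ b) (h : jumpCount s a = jumpCount s b) :
    s a = s b := by
  induction b, hab using Nat.le_induction with
  | base => rfl
  | succ b hab ih =>
    have hb : jumpCount s a = jumpCount s b :=
      le_antisymm (jumpCount_mono hab) (h ▸ jumpCount_mono (Nat.le_succ b))
    have hstep := jumpCount_succ (s := s) b
    split_ifs at hstep with heq <;> [rw [ih hb, heq]; omega]

lemma SkipFreePathR.qvR_eq_jumpCount (hskip : SkipFreePathR s) (k : ℕ) :
    qvR s k = jumpCount s k := by
  rw [qvR, jumpCount, Nat.cast_sum]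
  refine sum_congr rfl fun j _ => ?_
  rcases hskip.2 j with h | h | h <;> simp only [← sub_eq_zero (a := s (j + 1)), h] <;> norm_num

lemma SkipFreePathR.tendsto_jumpCount_atTop (hskip : SkipFreePathR s)
    (hdiv : Tendsto (qvR s) atTop atTop) : Tendsto (jumpCount s) atTop atTop :=
  tendsto_natCast_atTop_iff.1 (by rwa [← funext hskip.qvR_eq_jumpCount])

end Path

section Passage

variable {s : ℕ → ℝ} (hdiv : Tendsto (jumpCount s) atTop atTop)
include hdiv

lemma le_jumpCount_passageTime (n : ℕ) : n ≤ jumpCount s (passageTime s n) :=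
  Nat.sInf_mem (hdiv.eventually_ge_atTop n).exists

lemma passageTime_le_iff {n k : ℕ} : passageTime s n ≤ k ↔ n ≤ jumpCount s k :=
  ⟨fun h => (le_jumpCount_passageTime hdiv n).trans (jumpCount_mono h), fun h => Nat.sInf_le h⟩

lemma jumpCount_passageTime (n : ℕ) : jumpCount s (passageTime s n) = n := by
  have hge := le_jumpCount_passageTime hdiv n
  cases h : passageTime s n with
  | zero => simp only [h, jumpCount_zero] at hge ⊢; omega
  | succ m =>
    have hlt : jumpCount s m < n := by rw [← not_le, ← passageTime_le_iff hdiv, h]; omega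
    have hstep := jumpCount_succ (s := s) m
    rw [h] at hge
    split_ifs at hstep <;> omega

lemma jumpCount_eq_iff {n k : ℕ} :
    jumpCount s k = n ↔ passageTime s n ≤ k ∧ k < passageTime s (n + 1) := by
  rw [passageTime_le_iff hdiv, ← not_le, passageTime_le_iff hdiv]
  omega

lemma passageTime_lt_passageTime_succ (n : ℕ) : passageTime s n < passageTime s (n + 1) :=
  ((jumpCount_eq_iff hdiv).1 (jumpCount_passageTime hdiv n)).2

lemma SkipFreePathR.tauR_eq_passageTime (hskip : SkipFreePathR s) (n : ℕ) :
    tauR s n = passageTime s n := by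
  induction n with
  | zero => exact (Nat.le_zero.1 ((passageTime_le_iff hdiv).2 (Nat.zero_le _))).symm
  | succ n ih =>
    have hlt := passageTime_lt_passageTime_succ hdiv
    have hset : {k | tauR s n < k ∧ qvR s k = (n + 1 : ℝ)} =
        {k | passageTime s (n + 1) ≤ k ∧ k < passageTime s (n + 1 + 1)} := by
      ext k
      simp only [Set.mem_ofPred_eq, ih, hskip.qvR_eq_jumpCount, ← Nat.cast_add_one, Nat.cast_inj,
        jumpCount_eq_iff hdiv]
      have := hlt n
      omega
    have hmin : sInf {k | passageTime s (n + 1) ≤ k ∧ k < passageTime s (n + 1 + 1)} =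
        passageTime s (n + 1) :=
      le_antisymm (Nat.sInf_le ⟨le_rfl, hlt _⟩) (le_csInf ⟨_, le_rfl, hlt _⟩ fun k hk => hk.1)
    rw [tauR, hset, hmin, ih]
    exact max_eq_right (hlt n).le

lemma SkipFreePathR.SMR_succ_sub_SMR (hskip : SkipFreePathR s) (n : ℕ) :
    SMR s (n + 1) - SMR s n = passageIncrement s n := by
  simp only [SMR, hskip.tauR_eq_passageTime hdiv, passageIncrement]

lemma passageIncrement_eq_sub_pred (n : ℕ) :
    passageIncrement s n = s (passageTime s (n + 1)) - s (passageTime s (n + 1) - 1) := by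
  have hlt := passageTime_lt_passageTime_succ hdiv n
  have hpred : jumpCount s (passageTime s (n + 1) - 1) = n :=
    (jumpCount_eq_iff hdiv).2 ⟨by omega, by omega⟩
  rw [passageIncrement,
    eq_of_jumpCount_eq (by omega) ((jumpCount_passageTime hdiv n).trans hpred.symm)]

lemma SkipFreePathR.passageIncrement_eq_one_or_eq_neg_one (hskip : SkipFreePathR s) (n : ℕ) :
    passageIncrement s n = 1 ∨ passageIncrement s n = -1 := by
  have hlt := passageTime_lt_passageTime_succ hdiv n
  obtain ⟨p, hp⟩ : ∃ p, passageTime s (n + 1) = p + 1 :=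
    Nat.exists_eq_add_one_of_ne_zero (by omega)
  have hp1 : jumpCount s (p + 1) = n + 1 := hp ▸ jumpCount_passageTime hdiv (n + 1)
  have hp0 : jumpCount s p = n := (jumpCount_eq_iff hdiv).2 ⟨by omega, by omega⟩
  have hne : s (p + 1) ≠ s p := fun h => by rw [jumpCount_succ, h, if_pos rfl] at hp1; omega
  rw [passageIncrement_eq_sub_pred hdiv, hp, Nat.add_sub_cancel]
  rcases hskip.2 p with h | h | h
  · exact .inl h
  · exact absurd (sub_eq_zero.1 h) hne
  · exact .inr h

lemma levelSum_eq_ite (n K : ℕ) :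
    levelSum s n K = if passageTime s (n + 1) ≤ K then passageIncrement s n else 0 := by
  have hlt := passageTime_lt_passageTime_succ hdiv n
  induction K with
  | zero => simp only [levelSum, sum_range_zero]; rw [if_neg (by omega)]
  | succ K ih =>
    rw [levelSum, sum_range_succ, ← levelSum, ih]
    by_cases hK : jumpCount s K = n
    · obtain ⟨h1, h2⟩ := (jumpCount_eq_iff hdiv).1 hK
      rw [if_pos hK, if_neg (not_le.2 h2), zero_add]
      rcases (show K + 1 ≤ _ from h2).eq_or_lt with h | h
      · rw [if_pos h.ge, passageIncrement_eq_sub_pred hdiv, ← h, Nat.add_sub_cancel]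
      · have hK' : jumpCount s (K + 1) = n := (jumpCount_eq_iff hdiv).2 ⟨by omega, h⟩
        rw [if_neg (not_le.2 h), eq_of_jumpCount_eq (Nat.le_succ K) (hK.trans hK'.symm),
          sub_self]
    · have hne : passageTime s (n + 1) ≠ K + 1 := fun h =>
        hK ((jumpCount_eq_iff hdiv).2 ⟨by omega, by omega⟩)
      rw [if_neg hK, add_zero]
      congr 1
      exact propext (by omega)

lemma levelSum_eq_passageIncrement {i n k : ℕ} (hk : jumpCount s k = n) (hi : i < n) :
    levelSum s i k = passageIncrement s i := by
  rw [levelSum_eq_ite hdiv, if_pos ((passageTime_le_iff hdiv).2 (by omega))]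

lemma tendsto_levelSum (n : ℕ) : Tendsto (levelSum s n) atTop (𝓝 (passageIncrement s n)) :=
  tendsto_atTop_of_eventually_const (i₀ := passageTime s (n + 1)) fun K hK => by
    rw [levelSum_eq_ite hdiv, if_pos hK]

lemma SkipFreePathR.abs_levelSum_le_one (hskip : SkipFreePathR s) (n K : ℕ) :
    |levelSum s n K| ≤ 1 := by
  rw [levelSum_eq_ite hdiv]
  split_ifs
  · rcases hskip.passageIncrement_eq_one_or_eq_neg_one hdiv n with h | h <;> simp [h]
  · simp

open scoped Classical in
lemma sum_ite_levelSum_mem_eq {n : ℕ} {T : Finset ℕ} {B : ℕ → Set ℝ} (hT : ∀ i ∈ T, i < n)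
    (K : ℕ) :
    ∑ k ∈ range K,
        (if jumpCount s k = n ∧ ∀ i ∈ T, levelSum s i k ∈ B i then s (k + 1) - s k else 0) =
      if ∀ i ∈ T, passageIncrement s i ∈ B i then levelSum s n K else 0 := by
  split_ifs with hB
  · refine sum_congr rfl fun k _ => if_congr ⟨And.left, fun hk => ⟨hk, fun i hi => ?_⟩⟩ rfl rfl
    exact (levelSum_eq_passageIncrement hdiv hk (hT i hi)).symm ▸ hB i hi
  · refine sum_eq_zero fun k _ => if_neg fun ⟨hk, hBk⟩ => hB fun i hi => ?_
    exact levelSum_eq_passageIncrement hdiv hk (hT i hi) ▸ hBk i hi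

end Passage

instance : IsProbabilityMeasure bernR :=
  ⟨by simp [bernR, ENNReal.inv_two_add_inv_two]⟩

lemma bernR_real_apply {B : Set ℝ} (hB : MeasurableSet B) :
    bernR.real B = (B.indicator 1 1 + B.indicator 1 (-1)) / 2 := by
  by_cases h1 : (1 : ℝ) ∈ B <;> by_cases h2 : (-1 : ℝ) ∈ B <;>
    simp [bernR, Measure.real, Measure.dirac_apply' _ hB, h1, h2, ENNReal.toReal_add]
  norm_num

section SignSequence

variable {Ω : Type*} {m0 : MeasurableSpace Ω} {P : Measure Ω}

lemma measure_inter_preimage_eq_bernR_mul [IsFiniteMeasure P] {X : Ω → ℝ} (hX : Measurable X)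
    (hsign : ∀ᵐ ω ∂P, X ω = 1 ∨ X ω = -1) {A : Set Ω} (hA : MeasurableSet A)
    (hmean : ∫ ω in A, X ω ∂P = 0) {B : Set ℝ} (hB : MeasurableSet B) :
    P (A ∩ X ⁻¹' B) = bernR B * P A := by
  set a : ℝ := B.indicator 1 1
  set b : ℝ := B.indicator 1 (-1)
  -- on `{-1, 1}` the indicator of `B` is an affine function
  have hind : ∀ᵐ ω ∂P, (X ⁻¹' B).indicator 1 ω = (a + b) / 2 + (a - b) / 2 * X ω := by
    filter_upwards [hsign] with ω h
    change B.indicator 1 (X ω) = _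
    rcases h with h | h <;> rw [h] <;> ring
  have hint : Integrable X P := .of_bound hX.aestronglyMeasurable 1 <| by
    filter_upwards [hsign] with ω h
    rcases h with h | h <;> simp [h]
  have hreal : P.real (A ∩ X ⁻¹' B) = bernR.real B * P.real A := calc
    P.real (A ∩ X ⁻¹' B) = ∫ ω in A, (X ⁻¹' B).indicator 1 ω ∂P := by
      rw [integral_indicator_one (hX hB), measureReal_restrict_apply (hX hB), Set.inter_comm]
    _ = ∫ ω in A, ((a + b) / 2 + (a - b) / 2 * X ω) ∂P :=
      setIntegral_congr_ae hA (by filter_upwards [hind] with ω h _ using h)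
    _ = bernR.real B * P.real A := by
      rw [integral_add (integrable_const _) (hint.integrableOn.const_mul _), integral_const_mul,
        hmean, setIntegral_const, bernR_real_apply hB]
      simp only [smul_eq_mul, mul_zero, add_zero]
      ring
  rw [← ENNReal.toReal_eq_toReal_iff' (measure_ne_top _ _)
    (ENNReal.mul_ne_top (measure_ne_top _ _) (measure_ne_top _ _)), ENNReal.toReal_mul]
  exact hreal

variable [IsProbabilityMeasure P] {X : ℕ → Ω → ℝ} (hX : ∀ n, Measurable (X n))
  (hsign : ∀ n, ∀ᵐ ω ∂P, X n ω = 1 ∨ X n ω = -1)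
  (hmean : ∀ n (T : Finset ℕ) (B : ℕ → Set ℝ), (∀ i ∈ T, i < n) →
    (∀ i ∈ T, MeasurableSet (B i)) → ∫ ω in ⋂ i ∈ T, X i ⁻¹' B i, X n ω ∂P = 0)
include hX hsign hmean

lemma measure_iInter_preimage_eq_prod_bernR (S : Finset ℕ) {B : ℕ → Set ℝ}
    (hB : ∀ i ∈ S, MeasurableSet (B i)) :
    P (⋂ i ∈ S, X i ⁻¹' B i) = ∏ i ∈ S, bernR (B i) := by
  classical
  induction S using Finset.induction_on_max with
  | empty => simp
  | insert a S hlt ih =>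
    have hBS : ∀ i ∈ S, MeasurableSet (B i) := fun i hi => hB i (mem_insert_of_mem hi)
    have hA : MeasurableSet (⋂ i ∈ S, X i ⁻¹' B i) :=
      .biInter S.countable_toSet fun i hi => hX i (hBS i hi)
    rw [set_biInter_insert, prod_insert fun ha => lt_irrefl a (hlt a ha), Set.inter_comm,
      measure_inter_preimage_eq_bernR_mul (hX a) (hsign a) hA (hmean a S B hlt hBS)
        (hB a (mem_insert_self a S)), ih hBS]

theorem iIndepFun_and_map_eq_bernR : iIndepFun X P ∧ ∀ n, P.map (X n) = bernR := by
  have hlaw : ∀ n {B : Set ℝ}, MeasurableSet B → P (X n ⁻¹' B) = bernR B := fun n B hB => by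
    simpa using
      measure_iInter_preimage_eq_prod_bernR hX hsign hmean {n} (B := fun _ => B) (by simpa)
  refine ⟨iIndepFun_iff_measure_inter_preimage_eq_mul.2 fun S B hB => ?_, fun n => ?_⟩
  · rw [measure_iInter_preimage_eq_prod_bernR hX hsign hmean S hB]
    exact prod_congr rfl fun i hi => (hlaw i (hB i hi)).symm
  · ext B hB
    rw [Measure.map_apply (hX n) hB, hlaw n hB]

end SignSequence

section Measurability

variable {Ω : Type*} {m : MeasurableSpace Ω} {f : ℕ → Ω → ℝ}

lemma Nat.sInf_le_iff_eq_empty_or {S : Set ℕ} {k : ℕ} :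
    sInf S ≤ k ↔ S = ∅ ∨ ∃ j ≤ k, j ∈ S := by
  rcases S.eq_empty_or_nonempty with rfl | hne
  · simp
  · refine ⟨fun h => .inr ⟨_, h, Nat.sInf_mem hne⟩, ?_⟩
    rintro (h | ⟨j, hj, hjS⟩)
    · exact absurd h hne.ne_empty
    · exact (Nat.sInf_le hjS).trans hj

lemma measurable_sInf_setOf {p : ℕ → Set Ω} (hp : ∀ k, MeasurableSet (p k)) :
    Measurable fun ω => sInf {k | ω ∈ p k} := by
  refine measurable_of_Iic fun k => ?_
  have hpre : (fun ω => sInf {k | ω ∈ p k}) ⁻¹' Set.Iic k = (⋂ j, (p j)ᶜ) ∪ ⋃ j ≤ k, p j := by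
    ext ω
    simp [Nat.sInf_le_iff_eq_empty_or, Set.eq_empty_iff_forall_notMem]
  rw [hpre]
  exact (MeasurableSet.iInter fun j => (hp j).compl).union
    (.biUnion (Set.to_countable _) fun j _ => hp j)

lemma measurable_jumpCount {k : ℕ} (hf : ∀ j ≤ k, Measurable (f j)) :
    Measurable fun ω => jumpCount (fun j => f j ω) k :=
  Finset.measurable_sum _ fun j hj => by
    rw [mem_range] at hj
    exact Measurable.ite (measurableSet_eq_fun (hf _ hj) (hf _ hj.le)) measurable_const
      measurable_const

lemma measurable_levelSum {n K : ℕ} (hf : ∀ j ≤ K, Measurable (f j)) :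
    Measurable fun ω => levelSum (fun j => f j ω) n K :=
  Finset.measurable_sum _ fun k hk => by
    rw [mem_range] at hk
    exact Measurable.ite
      (measurable_jumpCount (fun j hj => hf j (by omega)) (measurableSet_singleton n))
      ((hf _ hk).sub (hf _ hk.le)) measurable_const

lemma measurable_passageIncrement (hf : ∀ j, Measurable (f j)) (n : ℕ) :
    Measurable fun ω => passageIncrement (fun j => f j ω) n := by
  have hτ : ∀ n, Measurable fun ω => passageTime (fun j => f j ω) n := fun n =>
    measurable_sInf_setOf fun k => measurable_jumpCount (fun j _ => hf j) measurableSet_Ici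
  have heval : ∀ n, Measurable fun ω => f (passageTime (fun j => f j ω) n) ω := fun n =>
    (measurable_from_prod_countable_left (f := fun p : Ω × ℕ => f p.2 p.1) hf).comp
      (measurable_id.prodMk (hτ n))
  exact (heval (n + 1)).sub (heval n)

end Measurability

section Martingale

variable {Ω : Type*} {m0 : MeasurableSpace Ω} {P : Measure Ω} {ℱ : Filtration ℕ m0}
  {M : ℕ → Ω → ℝ}

lemma MeasureTheory.Martingale.integral_sum_indicator_sub_eq_zero [SigmaFiniteFiltration P ℱ]
    (hM : Martingale M ℱ P) {C : ℕ → Set Ω} (hC : ∀ k, MeasurableSet[ℱ k] (C k)) (K : ℕ) :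
    ∫ ω, ∑ k ∈ range K, (C k).indicator (M (k + 1) - M k) ω ∂P = 0 := by
  have hint : ∀ k, Integrable (M k) P := hM.integrable
  rw [integral_finsetSum _ fun k _ => ((hint (k + 1)).sub (hint k)).indicator (ℱ.le k _ (hC k))]
  refine sum_eq_zero fun k _ => ?_
  rw [integral_indicator (ℱ.le k _ (hC k)), Pi.sub_def,
    integral_sub (hint _).integrableOn (hint _).integrableOn,
    ← hM.setIntegral_eq (Nat.le_succ k) (hC k), sub_self]

theorem MeasureTheory.Martingale.setIntegral_passageIncrement_eq_zero [IsFiniteMeasure P]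
    (hM : Martingale M ℱ P) (hskip : ∀ ω, SkipFreePathR fun k => M k ω)
    (hdiv : ∀ᵐ ω ∂P, Tendsto (jumpCount fun k => M k ω) atTop atTop)
    (n : ℕ) (T : Finset ℕ) (B : ℕ → Set ℝ) (hT : ∀ i ∈ T, i < n)
    (hB : ∀ i ∈ T, MeasurableSet (B i)) :
    ∫ ω in ⋂ i ∈ T, (fun ω => passageIncrement (fun k => M k ω) i) ⁻¹' B i,
      passageIncrement (fun k => M k ω) n ∂P = 0 := by
  set X : ℕ → Ω → ℝ := fun i ω => passageIncrement (fun k => M k ω) i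
  set A := ⋂ i ∈ T, X i ⁻¹' B i
  have hMmeas : ∀ k, Measurable (M k) := fun k =>
    (hM.stronglyAdapted k).measurable.mono (ℱ.le k) le_rfl
  have hMℱ : ∀ k, ∀ j ≤ k, Measurable[ℱ k] (M j) := fun k j hj =>
    (hM.stronglyAdapted j).measurable.mono (ℱ.mono hj) le_rfl
  have hA : MeasurableSet A :=
    .biInter T.countable_toSet fun i hi => measurable_passageIncrement hMmeas i (hB i hi)
  -- On divergent paths `C k = {[M]_k = n} ∩ A`, since by then the level sums of the levels
  -- `i < n` are complete; unlike `A`, it is `ℱ k`-measurable.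
  set C : ℕ → Set Ω := fun k => {ω | jumpCount (fun j => M j ω) k = n} ∩
    ⋂ i ∈ T, {ω | levelSum (fun j => M j ω) i k ∈ B i}
  have hC : ∀ k, MeasurableSet[ℱ k] (C k) := fun k =>
    (measurable_jumpCount (hMℱ k) (measurableSet_singleton n)).inter
      (.biInter T.countable_toSet fun i hi => measurable_levelSum (hMℱ k) (hB i hi))
  set Z : ℕ → Ω → ℝ := fun K ω => ∑ k ∈ range K, (C k).indicator (M (k + 1) - M k) ω
  have hZ : ∀ᵐ ω ∂P, ∀ K, Z K ω = A.indicator (fun ω => levelSum (fun j => M j ω) n K) ω := by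
    filter_upwards [hdiv] with ω hω K
    classical
    simpa [Z, C, A, X, Set.indicator_apply] using sum_ite_levelSum_mem_eq (B := B) hω hT K
  have hbound : ∀ K, ∀ᵐ ω ∂P, ‖Z K ω‖ ≤ 1 := fun K => by
    filter_upwards [hZ, hdiv] with ω hZω hω
    rw [hZω K]
    exact (norm_indicator_le_norm_self _ _).trans ((hskip ω).abs_levelSum_le_one hω n K)
  have hlim : ∀ᵐ ω ∂P, Tendsto (fun K => Z K ω) atTop (𝓝 (A.indicator (X n) ω)) := by
    filter_upwards [hZ, hdiv] with ω hZω hω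
    by_cases hωA : ω ∈ A
    · simpa [hZω, hωA] using tendsto_levelSum hω n
    · simp [hZω, hωA]
  have hZmeas : ∀ K, AEStronglyMeasurable (Z K) P := fun K =>
    (Finset.measurable_sum _ fun k _ =>
      ((hMmeas _).sub (hMmeas _)).indicator (ℱ.le k _ (hC k))).aestronglyMeasurable
  rw [← integral_indicator hA]
  refine tendsto_nhds_unique (tendsto_integral_of_dominated_convergence (fun _ => 1) hZmeas
    (integrable_const 1) hbound hlim) ?_
  simp [Z, hM.integral_sum_indicator_sub_eq_zero hC]

end Martingale

theorem divergent_skip_free_martingale_time_change_is_bernoulliRW_general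
    {Ω : Type*} {m0 : MeasurableSpace Ω} {P : Measure Ω} [IsProbabilityMeasure P]
    (ℱ : Filtration ℕ m0) (M : ℕ → Ω → ℝ)
    (hskip : ∀ ω, SkipFreePathR (fun n => M n ω))
    (hmart : Martingale M ℱ P)
    (hdiv : ∀ᵐ ω ∂P, Tendsto (fun n => qvR (fun k => M k ω) n) atTop atTop) :
    (∀ ω, SMR (fun k => M k ω) 0 = 0) ∧
      iIndepFun
        (fun n ω => SMR (fun k => M k ω) (n + 1) - SMR (fun k => M k ω) n) P ∧
      ∀ n, Measure.map
          (fun ω => SMR (fun k => M k ω) (n + 1) - SMR (fun k => M k ω) n) P = bernR := by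
  have hMmeas : ∀ k, Measurable (M k) := fun k =>
    (hmart.stronglyAdapted k).measurable.mono (ℱ.le k) le_rfl
  have hjump : ∀ᵐ ω ∂P, Tendsto (jumpCount fun k => M k ω) atTop atTop := by
    filter_upwards [hdiv] with ω hω using (hskip ω).tendsto_jumpCount_atTop hω
  have hincr : ∀ n, (fun ω => SMR (fun k => M k ω) (n + 1) - SMR (fun k => M k ω) n) =ᵐ[P]
      fun ω => passageIncrement (fun k => M k ω) n := fun n => by
    filter_upwards [hjump] with ω hω using (hskip ω).SMR_succ_sub_SMR hω n
  have hsign : ∀ n, ∀ᵐ ω ∂P,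
      passageIncrement (fun k => M k ω) n = 1 ∨ passageIncrement (fun k => M k ω) n = -1 := by
    intro n
    filter_upwards [hjump] with ω hω
    exact (hskip ω).passageIncrement_eq_one_or_eq_neg_one hω n
  obtain ⟨hindep, hlaw⟩ := iIndepFun_and_map_eq_bernR (measurable_passageIncrement hMmeas) hsign
    (hmart.setIntegral_passageIncrement_eq_zero hskip hjump)
  exact ⟨fun ω => (hskip ω).1, (iIndepFun_congr hincr).2 hindep,
    fun n => (Measure.map_congr (hincr n)).trans (hlaw n)⟩

/-- **Dambis–Dubins–Schwarz theorem for skip free martingales.** If `M` is a divergent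
skip free martingale (with respect to a filtration to which its quadratic variation is
adapted), then the time-changed process `S^M = (M_{τ_n})_n` is a symmetric Bernoulli
random walk: it starts at `0` and has i.i.d. increments uniform on `{-1, +1}`. -/
theorem divergent_skip_free_martingale_time_change_is_bernoulliRW
    {Ω : Type*} {m0 : MeasurableSpace Ω} {P : Measure Ω} [IsProbabilityMeasure P]
    (ℱ : Filtration ℕ m0) (M : ℕ → Ω → ℝ)
    (hskip : ∀ ω, SkipFreePathR (fun n => M n ω))
    (hmart : Martingale M ℱ P)
    (hqv_adapted : Adapted ℱ (fun n ω => qvR (fun k => M k ω) n))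
    (hdiv : ∀ᵐ ω ∂P, Tendsto (fun n => qvR (fun k => M k ω) n) atTop atTop) :
    (∀ ω, SMR (fun k => M k ω) 0 = 0) ∧
      iIndepFun
        (fun n ω => SMR (fun k => M k ω) (n + 1) - SMR (fun k => M k ω) n) P ∧
      ∀ n, Measure.map
          (fun ω => SMR (fun k => M k ω) (n + 1) - SMR (fun k => M k ω) n) P = bernR :=
  divergent_skip_free_martingale_time_change_is_bernoulliRW_general ℱ M hskip hmart hdiv
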